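/- The Grundy sequence g for Maximum Nim with rule f(n) = ⌊(n-1)/2⌋ (g(0) = g(1) = 0) satisfies: if n has binary expansion n = 2^a + ... + 2^y + 2^z with a > ... > y > z ≥ 0, then g(n) = 2^(a-z-1) + ... + 2^(y-z-1). Equivalently, g(n) = (n - 2^z) / 2^(z+1) where 2^z is the largest power of 2 dividing n. -/
import Mathlib


open Classical

noncomputable section

/-- The minimal excludant of a set of naturals. -/
def mex (S : Set ℕ) : ℕ := sInf {v | v ∉ S}

/-- A rule sequence is regular if `f 0 = 0`, `f n ≤ n`, and `f` increases by 0 or 1. -/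
def Regular (f : ℕ → ℕ) : Prop :=
  f 0 = 0 ∧ (∀ n, f n ≤ n) ∧ ∀ n, f n ≤ f (n + 1) ∧ f (n + 1) ≤ f n + 1

/-- `g` is the Grundy sequence for Maximum Nim with rule `f`:
`g n = mex { g (n - i) : 1 ≤ i ≤ f n }`. -/
def MaxNimGrundy (f g : ℕ → ℕ) : Prop :=
  ∀ n, g n = mex {v | ∃ i, 1 ≤ i ∧ i ≤ f n ∧ g (n - i) = v}

/-- `h` is the Grundy sequence for Minimum Nim with rule `f`:
`h n = mex { h i : 0 ≤ i ≤ n - f n - 1 }`. -/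
def MinNimGrundy (f h : ℕ → ℕ) : Prop :=
  ∀ n, h n = mex {v | ∃ i, i + f n + 1 ≤ n ∧ h i = v}

/-- Every natural number occurs infinitely often. -/
def Infinitive (g : ℕ → ℕ) : Prop := ∀ k, {n | g n = k}.Infinite

/-- The position of the first occurrence of `k` in `g`. -/
def firstOcc (g : ℕ → ℕ) (k : ℕ) : ℕ := sInf {n | g n = k}

/-- `n` is not the first occurrence of its value in `g`. -/
def NotFirst (g : ℕ → ℕ) (n : ℕ) : Prop := ∃ m < n, g m = g n

/-- The subsequence of `g` obtained by deleting the first occurrence of each value. -/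
def Lam (g : ℕ → ℕ) : ℕ → ℕ := fun m => g (Nat.nth (NotFirst g) m)

/-- Kimberling's fractal sequences: infinitive, first occurrences in increasing
order of value (F2), and deleting first occurrences leaves the sequence unchanged (F3). -/
def Fractal (g : ℕ → ℕ) : Prop :=
  Infinitive g ∧
  (∀ j k, j < k → firstOcc g j < firstOcc g k) ∧
  (∀ m, Lam g m = g m)

/-- The restriction `g|M`: the subsequence of terms of `g` lying in `M`. -/
def restrictSeq (g : ℕ → ℕ) (M : Set ℕ) : ℕ → ℕ :=
  fun m => g (Nat.nth (fun n => g n ∈ M) m)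

/-- An interspersion: an infinitive sequence such that for `i < j` the restriction
`g|{i,j}` is an initial block of `i`'s followed by strict alternation `j, i, j, i, ...`. -/
def Interspersion (g : ℕ → ℕ) : Prop :=
  Infinitive g ∧ ∀ i j, i < j → ∃ N,
    (∀ n < N, restrictSeq g {i, j} n = i) ∧
    ∀ n, restrictSeq g {i, j} (N + 2 * n) = j ∧
         restrictSeq g {i, j} (N + 2 * n + 1) = i

/-- `striangle g i j`: the number of occurrences of `i` strictly before the first
occurrence of `j`, not counting the occurrence `g 0 = 0` when `i = 0`. -/
def striangle (g : ℕ → ℕ) (i j : ℕ) : ℕ :=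
  Set.ncard {n | g n = i ∧ n < firstOcc g j ∧ (i = 0 → n ≠ 0)}

/-- A subadditive triangle: `s i j + s j k - 1 ≤ s i k ≤ s i j + s j k` for `i < j < k`. -/
def SubadditiveTriangle (s : ℕ → ℕ → ℕ) : Prop :=
  ∀ i j k, i < j → j < k →
    s i j + s j k ≤ s i k + 1 ∧ s i k ≤ s i j + s j k

lemma mex_eq_of {S : Set ℕ} {a : ℕ} (h1 : ∀ k, k < a → k ∈ S) (h2 : a ∉ S) :
    mex S = a := by
  unfold mex
  refine le_antisymm (Nat.sInf_le h2) (le_csInf ⟨a, h2⟩ ?_)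
  intro b hb
  by_contra h
  push_neg at h
  exact hb (h1 b h)

def Fv (n : ℕ) : ℕ := (n - 2 ^ padicValNat 2 n) / 2 ^ (padicValNat 2 n + 1)

lemma Fv_pow_mul {z t : ℕ} (ht : Odd t) : Fv (2 ^ z * t) = (t - 1) / 2 := by
  haveI : Fact (Nat.Prime 2) := ⟨Nat.prime_two⟩
  obtain ⟨c, rfl⟩ := ht
  have ht2 : ¬ (2 ∣ 2 * c + 1) := by omega
  have hv : padicValNat 2 (2 ^ z * (2 * c + 1)) = z := by
    rw [padicValNat.mul (by positivity) (by omega), padicValNat.prime_pow,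
        padicValNat.eq_zero_of_not_dvd ht2, add_zero]
  have h1 : 2 ^ z * (2 * c + 1) = 2 ^ (z + 1) * c + 2 ^ z := by rw [pow_succ]; ring
  rw [Fv, hv, h1, Nat.add_sub_cancel, Nat.mul_div_cancel_left _ (by positivity)]
  omega

lemma odd_decomp {n : ℕ} (hn : 1 ≤ n) : ∃ z t, Odd t ∧ n = 2 ^ z * t := by
  obtain ⟨k, m, hm, rfl⟩ := Nat.exists_eq_pow_mul_and_not_dvd (by omega : n ≠ 0) 2 (by norm_num)
  exact ⟨k, m, Nat.odd_iff.mpr (by omega), rfl⟩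

lemma key (f g : ℕ → ℕ) (hf : ∀ n, f n = (n - 1) / 2) (hg : MaxNimGrundy f g) :
    ∀ n, 1 ≤ n → g n = Fv n := by
  intro n
  induction n using Nat.strong_induction_on with
  | _ n ih =>
  intro hn
  have hgn := hg n
  rw [hf] at hgn
  have hset : {v | ∃ i, 1 ≤ i ∧ i ≤ (n - 1) / 2 ∧ g (n - i) = v}
      = {v | ∃ m, n < 2 * m ∧ m < n ∧ Fv m = v} := by
    ext v
    simp only [Set.mem_setOf_eq]
    constructor
    · rintro ⟨i, hi1, hi2, rfl⟩
      exact ⟨n - i, by omega, by omega, (ih (n - i) (by omega) (by omega)).symm⟩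
    · rintro ⟨m, hm1, hm2, rfl⟩
      refine ⟨n - m, by omega, by omega, ?_⟩
      rw [show n - (n - m) = m by omega]
      exact ih m hm2 (by omega)
  rw [hset] at hgn
  rw [hgn]
  obtain ⟨b, t0, ht0, hnrep⟩ := odd_decomp hn
  have ht0pos : 1 ≤ t0 := ht0.pos
  have hFn : Fv n = (t0 - 1) / 2 := by rw [hnrep, Fv_pow_mul ht0]
  apply mex_eq_of
  · -- every k < Fv n is attained
    intro k hk
    have ht0' : 2 * k + 1 < t0 := by
      have := Nat.odd_iff.mp ht0
      omega
    set t := 2 * k + 1 with htdef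
    have htn : t ≤ n := by
      calc t ≤ t0 := by omega
        _ ≤ 2 ^ b * t0 := Nat.le_mul_of_pos_left _ (by positivity)
        _ = n := hnrep.symm
    have hnt : n / t ≠ 0 := by
      have := Nat.one_le_div_iff (by omega : 0 < t) |>.mpr htn
      omega
    set z := Nat.log 2 (n / t) with hzdef
    refine ⟨2 ^ z * t, ?_, ?_, ?_⟩
    · -- n < 2 * (2^z * t)
      have hup : n / t < 2 ^ (z + 1) := Nat.lt_pow_succ_log_self (by norm_num) _
      have : n < 2 ^ (z + 1) * t := (Nat.div_lt_iff_lt_mul (by omega)).mp hup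
      calc n < 2 ^ (z + 1) * t := this
        _ = 2 * (2 ^ z * t) := by rw [pow_succ]; ring
    · -- 2^z * t < n
      have hle : 2 ^ z * t ≤ n := by
        calc 2 ^ z * t ≤ (n / t) * t := by
              exact Nat.mul_le_mul_right _ (Nat.pow_log_le_self 2 hnt)
          _ ≤ n := Nat.div_mul_le_self _ _
      have hne : 2 ^ z * t ≠ n := by
        intro h
        have : Fv n = k := by rw [← h, Fv_pow_mul (Nat.odd_iff.mpr (by omega))]; omega
        omega
      omega
    · rw [Fv_pow_mul (Nat.odd_iff.mpr (by omega))]; omega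
  · -- Fv n not attained
    rintro ⟨m, hm1, hm2, hFm⟩
    obtain ⟨a, s, hs, hmrep⟩ := odd_decomp (by omega : 1 ≤ m)
    have hFm' : (s - 1) / 2 = (t0 - 1) / 2 := by
      rw [← Fv_pow_mul hs, ← hmrep, hFm, hFn]
    have hst : s = t0 := by
      have h1 := Nat.odd_iff.mp hs
      have h2 := Nat.odd_iff.mp ht0
      omega
    subst hst
    have hab : 2 ^ a < 2 ^ b := by
      have : 2 ^ a * s < 2 ^ b * s := by rw [← hmrep, ← hnrep]; exact hm2
      exact lt_of_mul_lt_mul_right this (by omega)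
    have hab' : a < b := (Nat.pow_lt_pow_iff_right (by norm_num)).mp hab
    have : 2 * m ≤ n := by
      calc 2 * m = 2 ^ (a + 1) * s := by rw [hmrep, pow_succ]; ring
        _ ≤ 2 ^ b * s := Nat.mul_le_mul_right _ (Nat.pow_le_pow_right (by norm_num) (by omega))
        _ = n := hnrep.symm
    omega

/-- for the rule `f n = ⌊(n-1)/2⌋`, the Grundy value of `n ≥ 1` is
obtained by truncating the binary expansion of `n` at its last one:
`g n = (n - 2^z) / 2^(z+1)` where `2^z` is the largest power of 2 dividing `n`. -/
theorem maxNim_half_rule_formula (f g : ℕ → ℕ) (hf : ∀ n, f n = (n - 1) / 2)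
    (hg : MaxNimGrundy f g) :
    ∀ n, 1 ≤ n →
      g n = (n - 2 ^ padicValNat 2 n) / 2 ^ (padicValNat 2 n + 1) := by
  exact key f g hf hg
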